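/- Let r ≥ 1, let T be a heavy family of r-element subsets of [n], and let H = ↓T. If X ∈ H with |X| = k < r, then X has at least 2(r − k) − 1 upper covers in H; that is, |{Y ∈ H : X ⊂ Y and |Y| = k+1}| ≥ 2(r − k) − 1. -/

import Mathlib

open scoped Classical

/-- The width of a finite family of finite sets: the maximum size of an
antichain (under inclusion) contained in the family. -/
noncomputable def width (F : Finset (Finset ℕ)) : ℕ :=
  (F.powerset.filter (fun A => ∀ x ∈ A, ∀ y ∈ A, x ≠ y → ¬ x ⊆ y)).sup Finset.card

/-- The downset generated by a family of finite sets. -/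
def downGen (T : Finset (Finset ℕ)) : Finset (Finset ℕ) :=
  T.biUnion Finset.powerset

/-!
The sets `A \ X` with `X ⊆ A ∈ T` (the link of `X`) are `(r - k)`-sets whose union `U` is
in bijection with the upper covers of `X` in `↓T`. If `|U| < 2(r - k) - 1`, the local LYM
inequality makes the shadow of the link strictly larger than the link. Replacing the members
of `T` above `X` by the `(r - 1)`-sets `X ∪ S`, `S` in that shadow, then gives an antichain
in `↓T` with more than `|T|` elements, contradicting heaviness.
-/

open Finset
open scoped FinsetFamily

section Shadow

variable {α : Type*} [DecidableEq α] {𝒜 : Finset (Finset α)} {U : Finset α} {d : ℕ}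

theorem card_mul_le_card_shadow_mul_of_subset (hU : ∀ A ∈ 𝒜, A ⊆ U)
    (h𝒜 : (𝒜 : Set (Finset α)).Sized d) :
    #𝒜 * d ≤ #(∂ 𝒜) * (#U - d + 1) := by
  have hflags : #(𝒜.sigma id) = #𝒜 * d := by
    rw [card_sigma]
    exact sum_const_nat fun A hA => h𝒜 hA
  have hcoflags : #((∂ 𝒜).sigma (U \ ·)) ≤ #(∂ 𝒜) * (#U - d + 1) := by
    rw [card_sigma, ← smul_eq_mul]
    refine sum_le_card_nsmul _ _ _ fun S hS => ?_
    obtain ⟨A, hA, hSA, hcard⟩ := mem_shadow_iff_exists_mem_card_add_one.1 hS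
    rw [card_sdiff_of_subset (hSA.trans (hU A hA))]
    have := h𝒜 hA
    omega
  rw [← hflags]
  refine le_trans (card_le_card_of_injOn (fun p => ⟨p.1.erase p.2, p.2⟩) ?_ ?_) hcoflags
  · rintro ⟨A, a⟩ h
    simp only [coe_sigma, Set.mem_sigma_iff, mem_coe, id] at h ⊢
    exact ⟨erase_mem_shadow h.1 h.2, mem_sdiff.2 ⟨hU A h.1 h.2, notMem_erase a A⟩⟩
  · rintro ⟨A, a⟩ h ⟨B, b⟩ h' heq
    simp only [coe_sigma, Set.mem_sigma_iff, mem_coe, id, Sigma.mk.injEq, heq_eq_eq] at h h' heq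
    obtain ⟨hAB, rfl⟩ := heq
    rw [← insert_erase h.2, hAB, insert_erase h'.2]

theorem card_lt_card_shadow_of_subset (hU : ∀ A ∈ 𝒜, A ⊆ U)
    (h𝒜 : (𝒜 : Set (Finset α)).Sized d) (hne : 𝒜.Nonempty) (hsmall : #U + 2 ≤ 2 * d) :
    #𝒜 < #(∂ 𝒜) := by
  obtain ⟨A, hA⟩ := hne
  have hdU : d ≤ #U := h𝒜 hA ▸ card_le_card (hU A hA)
  refine Nat.lt_of_mul_lt_mul_right (a := #U - d + 1) ?_
  calc #𝒜 * (#U - d + 1) < #𝒜 * d :=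
        Nat.mul_lt_mul_of_pos_left (by omega) (card_pos.2 ⟨A, hA⟩)
    _ ≤ #(∂ 𝒜) * (#U - d + 1) := card_mul_le_card_shadow_mul_of_subset hU h𝒜

end Shadow

section Link

variable {α : Type*} [DecidableEq α] {T : Finset (Finset α)} {X : Finset α} {r : ℕ}

def link (T : Finset (Finset α)) (X : Finset α) : Finset (Finset α) :=
  {A ∈ T | X ⊆ A}.image (· \ X)

theorem mem_link {S : Finset α} : S ∈ link T X ↔ ∃ A ∈ T, X ⊆ A ∧ A \ X = S := by
  simp only [link, mem_image, mem_filter, and_assoc]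

theorem card_link : #(link T X) = #{A ∈ T | X ⊆ A} := by
  refine card_image_of_injOn fun A hA B hB hAB => ?_
  simp only [coe_filter, Set.mem_ofPred_eq] at hA hB
  rw [← sdiff_union_of_subset hA.2, ← sdiff_union_of_subset hB.2]
  exact congrArg (· ∪ X) hAB

theorem sized_link (hT : (T : Set (Finset α)).Sized r) :
    (link T X : Set (Finset α)).Sized (r - #X) := by
  intro S hS
  obtain ⟨A, hA, hXA, rfl⟩ := mem_link.1 hS
  rw [card_sdiff_of_subset hXA, hT hA]

theorem subset_of_mem_shadow_link {S : Finset α} (hS : S ∈ ∂ (link T X)) :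
    ∃ A ∈ T, X ⊆ A ∧ S ⊆ A \ X := by
  obtain ⟨_, hL, hSL, -⟩ := mem_shadow_iff_exists_mem_card_add_one.1 hS
  obtain ⟨A, hA, hXA, rfl⟩ := mem_link.1 hL
  exact ⟨A, hA, hXA, hSL⟩

end Link

theorem mem_downGen {T : Finset (Finset ℕ)} {Y : Finset ℕ} :
    Y ∈ downGen T ↔ ∃ A ∈ T, Y ⊆ A := by
  simp only [downGen, mem_biUnion, mem_powerset]

theorem subset_downGen (T : Finset (Finset ℕ)) : T ⊆ downGen T :=
  fun A hA => mem_downGen.2 ⟨A, hA, Subset.rfl⟩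

theorem card_le_width {F W : Finset (Finset ℕ)} (hWF : W ⊆ F)
    (hW : IsAntichain (· ⊆ ·) (W : Set (Finset ℕ))) : #W ≤ width F :=
  le_sup (f := card) (mem_filter.2 ⟨mem_powerset.2 hWF, fun _ hx _ hy hxy => hW hx hy hxy⟩)

/-- The upper covers of `X` are the sets `insert y X` with `y` in the union of the link. -/
theorem card_upperCovers_downGen (T : Finset (Finset ℕ)) (X : Finset ℕ) :
    #{Y ∈ downGen T | X ⊂ Y ∧ #Y = #X + 1} = #((link T X).biUnion id) := by
  have hmem (y : ℕ) :
      y ∈ (link T X).biUnion id ↔ ∃ A ∈ T, X ⊆ A ∧ y ∈ A ∧ y ∉ X := by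
    simp only [mem_biUnion, mem_link, id]
    constructor
    · rintro ⟨_, ⟨A, hA, hXA, rfl⟩, hy⟩
      exact ⟨A, hA, hXA, mem_sdiff.1 hy⟩
    · rintro ⟨A, hA, hXA, hy⟩
      exact ⟨_, ⟨A, hA, hXA, rfl⟩, mem_sdiff.2 hy⟩
  have hcovers : {Y ∈ downGen T | X ⊂ Y ∧ #Y = #X + 1} =
      ((link T X).biUnion id).image (insert · X) := by
    ext Y
    simp only [mem_filter, mem_image, hmem]
    constructor
    · rintro ⟨hY, hXY, hcard⟩
      obtain ⟨y, hyX, rfl⟩ := exists_eq_insert_iff.2 ⟨hXY.subset, hcard.symm⟩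
      obtain ⟨A, hA, hYA⟩ := mem_downGen.1 hY
      exact ⟨y, ⟨A, hA, (subset_insert y X).trans hYA, hYA (mem_insert_self y X), hyX⟩, rfl⟩
    · rintro ⟨y, ⟨A, hA, hXA, hyA, hyX⟩, rfl⟩
      exact ⟨mem_downGen.2 ⟨A, hA, insert_subset hyA hXA⟩, ssubset_insert hyX,
        card_insert_of_notMem hyX⟩
  rw [hcovers]
  refine card_image_of_injOn fun y hy y' _ h => ?_
  obtain ⟨-, -, -, -, hyX⟩ := (hmem y).1 hy
  exact (insert_inj hyX).1 h

/-- The members of `T` not containing `X`, together with the sets `X ∪ S` for `S` in the shadow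
of the link, form an antichain in `downGen T`. -/
theorem card_filter_not_add_card_shadow_link_le_width {T : Finset (Finset ℕ)} {X : Finset ℕ}
    {r : ℕ} (hT : (T : Set (Finset ℕ)).Sized r) (hX : #X < r) :
    #{A ∈ T | ¬X ⊆ A} + #(∂ (link T X)) ≤ width (downGen T) := by
  set 𝒮 := (∂ (link T X)).image (X ∪ ·)
  have h𝒮card : #𝒮 = #(∂ (link T X)) := by
    refine card_image_of_injOn fun S hS S' hS' h => ?_
    obtain ⟨_, -, -, hSA⟩ := subset_of_mem_shadow_link hS
    obtain ⟨_, -, -, hSA'⟩ := subset_of_mem_shadow_link hS'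
    rw [← union_sdiff_cancel_left (disjoint_of_subset_right hSA disjoint_sdiff),
      ← union_sdiff_cancel_left (disjoint_of_subset_right hSA' disjoint_sdiff)]
    exact congrArg (· \ X) h
  have h𝒮 : ∀ Y ∈ 𝒮, X ⊆ Y ∧ #Y = r - 1 ∧ Y ∈ downGen T := by
    simp only [𝒮, mem_image]
    rintro _ ⟨S, hS, rfl⟩
    obtain ⟨A, hA, hXA, hSA⟩ := subset_of_mem_shadow_link hS
    have hcard : #S = r - #X - 1 := (sized_link hT).shadow hS
    refine ⟨subset_union_left, ?_,
      mem_downGen.2 ⟨A, hA, union_subset hXA (hSA.trans sdiff_subset)⟩⟩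
    rw [card_union_of_disjoint (disjoint_of_subset_right hSA disjoint_sdiff)]
    omega
  have hdisj : Disjoint {A ∈ T | ¬X ⊆ A} 𝒮 :=
    disjoint_left.2 fun A hA hA𝒮 => (mem_filter.1 hA).2 (h𝒮 A hA𝒮).1
  rw [← h𝒮card, ← card_union_of_disjoint hdisj]
  refine card_le_width (union_subset ((filter_subset _ T).trans (subset_downGen T))
    fun Y hY => (h𝒮 Y hY).2.2) ?_
  rw [coe_union, isAntichain_union]
  refine ⟨(hT.mono (coe_subset.2 (filter_subset _ T))).isAntichain,
    Set.Sized.isAntichain fun Y hY => (h𝒮 Y hY).2.1,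
    fun A hA Y hY _ => ⟨fun hAY => ?_, fun hYA => ?_⟩⟩
  · have := card_le_card hAY
    rw [hT (mem_of_mem_filter A hA), (h𝒮 Y hY).2.1] at this
    omega
  · exact (mem_filter.1 hA).2 ((h𝒮 Y hY).1.trans hYA)

theorem heavy_upper_covers_general (r k : ℕ) (T : Finset (Finset ℕ))
    (hTr : ∀ A ∈ T, A.card = r)
    (heavy : width (downGen T) ≤ T.card)
    (X : Finset ℕ) (hX : X ∈ downGen T) (hXk : X.card = k) (hkr : k < r) :
    2 * (r - k) - 1 ≤ ((downGen T).filter (fun Y => X ⊂ Y ∧ Y.card = k + 1)).card := by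
  subst hXk
  by_contra! hfew
  rw [card_upperCovers_downGen] at hfew
  obtain ⟨A, hA, hXA⟩ := mem_downGen.1 hX
  have hgrow : #(link T X) < #(∂ (link T X)) :=
    card_lt_card_shadow_of_subset (fun S hS => subset_biUnion_of_mem id hS) (sized_link hTr)
      ⟨A \ X, mem_link.2 ⟨A, hA, hXA, rfl⟩⟩ (by omega)
  have hwide := card_filter_not_add_card_shadow_link_le_width hTr hkr
  have hsplit := card_filter_add_card_filter_not (s := T) (X ⊆ ·)
  rw [card_link] at hgrow
  omega

/-- In the downset `H` generated by a heavy family of `r`-sets, every `k`-set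
with `k < r` has at least `2(r - k) - 1` upper covers in `H`. -/
theorem heavy_upper_covers (n r k : ℕ) (hr : 1 ≤ r) (T : Finset (Finset ℕ))
    (hT : ∀ A ∈ T, A ⊆ Finset.Icc 1 n)
    (hTr : ∀ A ∈ T, A.card = r)
    (heavy : width (downGen T) ≤ T.card)
    (X : Finset ℕ) (hX : X ∈ downGen T) (hXk : X.card = k) (hkr : k < r) :
    2 * (r - k) - 1 ≤ ((downGen T).filter (fun Y => X ⊂ Y ∧ Y.card = k + 1)).card :=
  heavy_upper_covers_general r k T hTr heavy X hX hXk hkr
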